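/- For every S ∈ V, every β ∈ {1,2,3}, and all X, P ∈ E, one has Σ_{α=1}^{3} ⟨(S J_α J_β − J_β S J_α) X, P⟩ · ⟨S J_α X, P⟩ = 0. (This expresses the vanishing of the Lie derivative of the constant tensor field T_S along the linear vector field v_β(X) = J_β X, i.e. the infinitesimal Sp(1)-invariance of T_S.) -/

import Mathlib

open scoped Quaternion RealInnerProductSpace

noncomputable section

/-- `E n = ℍ^{n+1}` as a real inner product space. -/
abbrev E (n : ℕ) := PiLp 2 (fun _ : Fin (n + 1) => ℍ)

/-- Componentwise right multiplication by the quaternion `q`, as a real-linear map. -/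
def Rmul (n : ℕ) (q : ℍ) : E n →ₗ[ℝ] E n where
  toFun X := WithLp.toLp 2 (fun s => X s * q)
  map_add' X Y := by ext s : 1; simp [add_mul]
  map_smul' c X := by ext s : 1; simp [smul_mul_assoc]

/-- The three complex structures `J₁, J₂, J₃ = J₁ ∘ J₂`. -/
def Js (n : ℕ) : Fin 3 → (E n →ₗ[ℝ] E n) :=
  ![Rmul n ⟨0, 1, 0, 0⟩, Rmul n ⟨0, 0, 1, 0⟩, Rmul n ⟨0, 1, 0, 0⟩ ∘ₗ Rmul n ⟨0, 0, 1, 0⟩]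

/-- `S` belongs to `V`: it is self-adjoint and commutes with `J₁, J₂, J₃`. -/
def InV (n : ℕ) (S : E n →ₗ[ℝ] E n) : Prop :=
  (∀ X Y : E n, ⟪S X, Y⟫ = ⟪X, S Y⟫) ∧
    (∀ α : Fin 3, S ∘ₗ Js n α = Js n α ∘ₗ S)

/-- The quadrilinear form `T_S`. -/
def T (n : ℕ) (S : E n →ₗ[ℝ] E n) (X Y P Q : E n) : ℝ :=
  (1 / 2) * ∑ α : Fin 3,
    (⟪S (Js n α X), P⟫ * ⟪S (Js n α Y), Q⟫ +
      ⟪S (Js n α X), Q⟫ * ⟪S (Js n α Y), P⟫)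

abbrev qv : Fin 3 → ℍ := ![⟨0,1,0,0⟩, ⟨0,0,1,0⟩, (⟨0,0,1,0⟩ : ℍ)*(⟨0,1,0,0⟩ : ℍ)]

lemma js_apply (n : ℕ) (α : Fin 3) (X : E n) (s : Fin (n+1)) :
    Js n α X s = X s * qv α := by
  fin_cases α <;> simp [Js, Rmul, qv, mul_assoc] <;>
    exact (mul_assoc _ (⟨0,0,1,0⟩ : ℍ) (⟨0,1,0,0⟩ : ℍ)).trans (by simp; rfl)

lemma jcomm (n : ℕ) (α β γ : Fin 3) (c : ℝ)
    (h : qv β * qv α - qv α * qv β = c • qv γ) (Y : E n) :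
    Js n α (Js n β Y) - Js n β (Js n α Y) = c • Js n γ Y := by
  ext s : 1
  have : (Js n α (Js n β Y) - Js n β (Js n α Y)) s
      = Js n α (Js n β Y) s - Js n β (Js n α Y) s := rfl
  rw [this]
  have hs : (c • Js n γ Y) s = c • (Js n γ Y s) := rfl
  rw [hs, js_apply, js_apply, js_apply, js_apply, js_apply, mul_assoc, mul_assoc,
    ← mul_sub, h, mul_smul_comm]

lemma key (n : ℕ) (S : E n →ₗ[ℝ] E n) (hS : InV n S) (α β γ : Fin 3) (c : ℝ)
    (h : qv β * qv α - qv α * qv β = c • qv γ) (X P : E n) :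
    ⟪S (Js n α (Js n β X)) - Js n β (S (Js n α X)), P⟫ = c * ⟪S (Js n γ X), P⟫ := by
  have hc : Js n β (S (Js n α X)) = S (Js n β (Js n α X)) := by
    have := congrFun (congrArg (DFunLike.coe) (hS.2 β)) (Js n α X)
    simpa using this.symm
  rw [hc, ← map_sub, jcomm n α β γ c h X, map_smul, real_inner_smul_left]

/-- infinitesimal `Sp(1)`-invariance of `T_S`:
for every `S ∈ V`, every `β`, and all `X, P ∈ E`,
`Σ_α ⟨(S J_α J_β − J_β S J_α) X, P⟩ · ⟨S J_α X, P⟩ = 0`. -/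
theorem stmt1 (n : ℕ) (S : E n →ₗ[ℝ] E n) (hS : InV n S) (β : Fin 3) (X P : E n) :
    ∑ α : Fin 3,
      ⟪S (Js n α (Js n β X)) - Js n β (S (Js n α X)), P⟫ * ⟪S (Js n α X), P⟫ = 0 := by
  rw [Fin.sum_univ_three]
  fin_cases β <;> beta_reduce <;> simp only [Fin.zero_eta, Fin.mk_one, Fin.reduceFinMk]
  · rw [key n S hS 0 0 0 0 (by ext <;> simp only [Quaternion.re_sub, Quaternion.imI_sub, Quaternion.imJ_sub, Quaternion.imK_sub, Quaternion.re_mul, Quaternion.imI_mul, Quaternion.imJ_mul, Quaternion.imK_mul, Quaternion.re_smul, Quaternion.imI_smul, Quaternion.imJ_smul, Quaternion.imK_smul] <;> simp [qv] <;> ring) X P,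
      key n S hS 1 0 2 (-2) (by ext <;> simp only [Quaternion.re_sub, Quaternion.imI_sub, Quaternion.imJ_sub, Quaternion.imK_sub, Quaternion.re_mul, Quaternion.imI_mul, Quaternion.imJ_mul, Quaternion.imK_mul, Quaternion.re_smul, Quaternion.imI_smul, Quaternion.imJ_smul, Quaternion.imK_smul] <;> simp [qv] <;> ring) X P,
      key n S hS 2 0 1 2 (by ext <;> simp only [Quaternion.re_sub, Quaternion.imI_sub, Quaternion.imJ_sub, Quaternion.imK_sub, Quaternion.re_mul, Quaternion.imI_mul, Quaternion.imJ_mul, Quaternion.imK_mul, Quaternion.re_smul, Quaternion.imI_smul, Quaternion.imJ_smul, Quaternion.imK_smul] <;> simp [qv] <;> ring) X P]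
    ring
  · rw [key n S hS 0 1 2 2 (by ext <;> simp only [Quaternion.re_sub, Quaternion.imI_sub, Quaternion.imJ_sub, Quaternion.imK_sub, Quaternion.re_mul, Quaternion.imI_mul, Quaternion.imJ_mul, Quaternion.imK_mul, Quaternion.re_smul, Quaternion.imI_smul, Quaternion.imJ_smul, Quaternion.imK_smul] <;> simp [qv] <;> ring) X P,
      key n S hS 1 1 0 0 (by ext <;> simp only [Quaternion.re_sub, Quaternion.imI_sub, Quaternion.imJ_sub, Quaternion.imK_sub, Quaternion.re_mul, Quaternion.imI_mul, Quaternion.imJ_mul, Quaternion.imK_mul, Quaternion.re_smul, Quaternion.imI_smul, Quaternion.imJ_smul, Quaternion.imK_smul] <;> simp [qv] <;> ring) X P,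
      key n S hS 2 1 0 (-2) (by ext <;> simp only [Quaternion.re_sub, Quaternion.imI_sub, Quaternion.imJ_sub, Quaternion.imK_sub, Quaternion.re_mul, Quaternion.imI_mul, Quaternion.imJ_mul, Quaternion.imK_mul, Quaternion.re_smul, Quaternion.imI_smul, Quaternion.imJ_smul, Quaternion.imK_smul] <;> simp [qv] <;> ring) X P]
    ring
  · rw [key n S hS 0 2 1 (-2) (by ext <;> simp only [Quaternion.re_sub, Quaternion.imI_sub, Quaternion.imJ_sub, Quaternion.imK_sub, Quaternion.re_mul, Quaternion.imI_mul, Quaternion.imJ_mul, Quaternion.imK_mul, Quaternion.re_smul, Quaternion.imI_smul, Quaternion.imJ_smul, Quaternion.imK_smul] <;> simp [qv] <;> ring) X P,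
      key n S hS 1 2 0 2 (by ext <;> simp only [Quaternion.re_sub, Quaternion.imI_sub, Quaternion.imJ_sub, Quaternion.imK_sub, Quaternion.re_mul, Quaternion.imI_mul, Quaternion.imJ_mul, Quaternion.imK_mul, Quaternion.re_smul, Quaternion.imI_smul, Quaternion.imJ_smul, Quaternion.imK_smul] <;> simp [qv] <;> ring) X P,
      key n S hS 2 2 0 0 (by ext <;> simp only [Quaternion.re_sub, Quaternion.imI_sub, Quaternion.imJ_sub, Quaternion.imK_sub, Quaternion.re_mul, Quaternion.imI_mul, Quaternion.imJ_mul, Quaternion.imK_mul, Quaternion.re_smul, Quaternion.imI_smul, Quaternion.imJ_smul, Quaternion.imK_smul] <;> simp [qv] <;> ring) X P]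
    ring
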